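/- arXiv:1805.12464 — 5 statements merged into one kernel-verified Lean document; each statement's English description precedes it below -/
import Mathlib

section
/- For any letters a, b in the alphabet A and any nonempty word v in the noncommutative polynomial algebra k⟨A⟩ equipped with the quasi-shuffle product * (defined recursively by (aw)*(bv) = a(w*bv) + b(aw*v) + (a⋄b)(w*v), with 1 as unit), one has a⋄(v*b) + b(a⋄v) = (a⋄v)*b + a⋄(bv), where ⋄ denotes the given commutative associative product on the span of letters, extended to act on the first letter of a word. -/
/-!
Write `v = c u`. One step of the quasi-shuffle recursion expands `v * b` and `(a ⋄ v) * b`.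
Since every element of `k⟨A⟩` is a combination of words, `a ⋄ -` acts on `c (u * b)` through
its first letter `c`, and the identity reduces to associativity of `⋄`.
-/

open TensorAlgebra

/- The span `kA` of the alphabet, with `⋄` written `*`, is modelled as a non-unital commutative
`k`-algebra `L`, and `k⟨A⟩` as `TensorAlgebra k L`. -/
variable (k : Type*) [Field k]
variable {L : Type*} [NonUnitalCommRing L] [Module k L]
  [SMulCommClass k L L] [IsScalarTower k L L]

def word (l : List L) : TensorAlgebra k L := (l.map fun a => TensorAlgebra.ι k a).prod

namespace TensorAlgebra

variable {R M : Type*} [CommSemiring R] [AddCommMonoid M] [Module R M]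

theorem span_range_prod_map_ι :
    Submodule.span R (Set.range fun l : List M => (l.map (ι R)).prod) = ⊤ := by
  rw [eq_top_iff]
  intro x _
  have hx : x ∈ Subalgebra.toSubmodule (Algebra.adjoin R (Set.range (ι R (M := M)))) := by
    rw [adjoin_range_ι]; trivial
  rw [Algebra.adjoin_eq_span] at hx
  refine Submodule.span_mono ?_ hx
  intro y hy
  obtain ⟨l, hl, rfl⟩ := Submonoid.exists_list_of_mem_closure hy
  obtain ⟨l, rfl⟩ : l ∈ Set.range (List.map (ι R)) := by rwa [Set.range_list_map]
  exact ⟨l, rfl⟩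

theorem apply_ι_mul_eq_of_prod_map_ι (f : TensorAlgebra R M →ₗ[R] TensorAlgebra R M) (c d : M)
    (h : ∀ l : List M, f (ι R c * (l.map (ι R)).prod) = ι R d * (l.map (ι R)).prod)
    (x : TensorAlgebra R M) : f (ι R c * x) = ι R d * x :=
  LinearMap.congr_fun (LinearMap.ext_on_range span_range_prod_map_ι
    (f := f ∘ₗ LinearMap.mulLeft R (ι R c)) (g := LinearMap.mulLeft R (ι R d)) h) x

end TensorAlgebra

theorem stmt0
    (m : TensorAlgebra k L →ₗ[k] TensorAlgebra k L →ₗ[k] TensorAlgebra k L)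
    (hmur : ∀ x, m x 1 = x)
    (hmrec : ∀ (a b : L) (v w : List L),
      m (TensorAlgebra.ι k a * word k v) (TensorAlgebra.ι k b * word k w)
        = TensorAlgebra.ι k a * m (word k v) (TensorAlgebra.ι k b * word k w)
          + TensorAlgebra.ι k b * m (TensorAlgebra.ι k a * word k v) (word k w)
          + TensorAlgebra.ι k (a * b) * m (word k v) (word k w))
    (D : L → TensorAlgebra k L →ₗ[k] TensorAlgebra k L)
    (hDw : ∀ (a c : L) (u : List L),
      D a (TensorAlgebra.ι k c * word k u) = TensorAlgebra.ι k (a * c) * word k u) :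
    ∀ (a b : L) (v : List L), v ≠ [] →
      D a (m (word k v) (TensorAlgebra.ι k b)) + TensorAlgebra.ι k b * D a (word k v)
        = m (D a (word k v)) (TensorAlgebra.ι k b) + D a (word k (b :: v)) := by
  intro a b v hv
  obtain ⟨c, u, rfl⟩ := List.exists_cons_of_ne_nil hv
  have word_cons : ∀ (c : L) u, word k (c :: u) = ι k c * word k u := fun _ _ => List.prod_cons
  have D_ι_mul : ∀ c (x : TensorAlgebra k L), D a (ι k c * x) = ι k (a * c) * x := fun c =>
    apply_ι_mul_eq_of_prod_map_ι (D a) c (a * c) (hDw a c)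
  have m_ι_mul_word_ι : ∀ c (u : List L), m (ι k c * word k u) (ι k b)
      = ι k c * m (word k u) (ι k b) + ι k b * (ι k c * word k u) + ι k (c * b) * word k u :=
    fun c u => by simpa [word, hmur] using hmrec c b u []
  rw [word_cons, word_cons, D_ι_mul, D_ι_mul, m_ι_mul_word_ι, m_ι_mul_word_ι, map_add, map_add,
    D_ι_mul, D_ι_mul, D_ι_mul, ← mul_assoc a c b, word_cons]
  abel
end

section
/- For letters a, b and nonempty words v, w in a quasi-shuffle algebra (k⟨A⟩, *), the identity (a⋄v)*(b⋄w) = a⋄(v*(b⋄w)) + b⋄((a⋄v)*w) − (a⋄b)⋄(v*w) holds. -/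
/-!
Quasi-shuffle algebras (Hoffman–Ihara).  We model the span `kA` of the alphabet
(with its commutative associative product `⋄`, written `*` in `L`) as a
non-unital commutative `k`-algebra `L`, and the word algebra `k⟨A⟩` as the
tensor algebra `TensorAlgebra k L`, in which a word `a₁⋯aₙ` is the product
`ι a₁ * ⋯ * ι aₙ`.
-/

open TensorAlgebra

variable (k : Type*) [Field k]
variable {L : Type*} [NonUnitalCommRing L] [Module k L]
  [SMulCommClass k L L] [IsScalarTower k L L]

/-!
Words span the tensor algebra, so a linear map is determined by its values on words; hence
`D a (ι c * x) = ι (a * c) * x` holds for every `x`, not only for words `x`. Writing `v = c v'` and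
`w = d w'`, one step of the quasi-shuffle recursion then expands all four products into terms
`ι e * m x y` with `x, y` among `v', w', c v', d w'`, and the letters `e` on the two sides agree
by associativity and commutativity of `⋄`.
-/

omit [SMulCommClass k L L] [IsScalarTower k L L] in
theorem word_cons (c : L) (u : List L) :
    word k (c :: u) = TensorAlgebra.ι k c * word k u := by
  simp [word]

omit [SMulCommClass k L L] [IsScalarTower k L L] in
theorem span_range_word : Submodule.span k (Set.range (word k : List L → TensorAlgebra k L)) = ⊤ := by
  have hclosure : (Submonoid.closure (Set.range (TensorAlgebra.ι k (M := L))) :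
      Set (TensorAlgebra k L)) ⊆ Set.range (word k) := by
    rintro x hx
    obtain ⟨l, hl, rfl⟩ := Submonoid.exists_list_of_mem_closure hx
    clear hx
    induction l with
    | nil => exact ⟨[], rfl⟩
    | cons y l ih =>
      obtain ⟨c, rfl⟩ := hl _ List.mem_cons_self
      obtain ⟨u, hu⟩ := ih fun z hz => hl z (List.mem_cons_of_mem _ hz)
      exact ⟨c :: u, by rw [word_cons, hu, List.prod_cons]⟩
  refine eq_top_iff.mpr fun x _ => Submodule.span_mono hclosure ?_
  rw [← Algebra.adjoin_eq_span, adjoin_range_ι]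
  trivial

omit [SMulCommClass k L L] [IsScalarTower k L L] in
theorem linearMap_ext_word {M : Type*} [AddCommGroup M] [Module k M]
    {f g : TensorAlgebra k L →ₗ[k] M} (h : ∀ u, f (word k u) = g (word k u)) : f = g :=
  LinearMap.ext_on_range (span_range_word k) h

omit [SMulCommClass k L L] [IsScalarTower k L L] in
theorem apply_ι_mul_of_word {f : TensorAlgebra k L →ₗ[k] TensorAlgebra k L} {c c' : L}
    (h : ∀ u, f (TensorAlgebra.ι k c * word k u) = TensorAlgebra.ι k c' * word k u)
    (x : TensorAlgebra k L) : f (TensorAlgebra.ι k c * x) = TensorAlgebra.ι k c' * x :=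
  LinearMap.congr_fun (linearMap_ext_word k (f := f ∘ₗ LinearMap.mulLeft k (TensorAlgebra.ι k c))
    (g := LinearMap.mulLeft k (TensorAlgebra.ι k c')) h) x

theorem stmt1
    (m : TensorAlgebra k L →ₗ[k] TensorAlgebra k L →ₗ[k] TensorAlgebra k L)
    (hmrec : ∀ (a b : L) (v w : List L),
      m (TensorAlgebra.ι k a * word k v) (TensorAlgebra.ι k b * word k w)
        = TensorAlgebra.ι k a * m (word k v) (TensorAlgebra.ι k b * word k w)
          + TensorAlgebra.ι k b * m (TensorAlgebra.ι k a * word k v) (word k w)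
          + TensorAlgebra.ι k (a * b) * m (word k v) (word k w))
    (D : L → TensorAlgebra k L →ₗ[k] TensorAlgebra k L)
    (hDw : ∀ (a c : L) (u : List L),
      D a (TensorAlgebra.ι k c * word k u) = TensorAlgebra.ι k (a * c) * word k u) :
    ∀ (a b : L) (v w : List L), v ≠ [] → w ≠ [] →
      m (D a (word k v)) (D b (word k w))
        = D a (m (word k v) (D b (word k w)))
          + D b (m (D a (word k v)) (word k w))
          - D (a * b) (m (word k v) (word k w)) := by
  intro a b v w hv hw
  obtain ⟨c, v, rfl⟩ := List.exists_cons_of_ne_nil hv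
  obtain ⟨d, w, rfl⟩ := List.exists_cons_of_ne_nil hw
  have hD (e c : L) (x : TensorAlgebra k L) :
      D e (TensorAlgebra.ι k c * x) = TensorAlgebra.ι k (e * c) * x :=
    apply_ι_mul_of_word k (hDw e c) x
  simp only [word_cons, hD, hmrec, map_add]
  simp only [mul_comm, mul_left_comm]
  abel
end

section
/- For any word w in a quasi-shuffle algebra and f ∈ t·k[[t]], one has Ψ_f(1/(1−λw)) = 1/(1 − f_⋄(λw)) in k⟨A⟩[[λ]], where 1/(1−λw) = Σ_{n≥0} λⁿ wⁿ (concatenation powers) and f_⋄(λw) = Σ_{n≥1} cₙ λⁿ w^{⋄n}. -/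
/-! Expanding `Ψ_f(wⁿ⁺¹)` along its first block gives
`Ψ_f(wⁿ⁺¹) = Σ_{j ≤ n} c_{j+1} w^{⋄(j+1)} Ψ_f(wⁿ⁻ʲ)`, which is exactly the coefficient
recursion characterising the inverse of `1 − f_⋄(λw)`. -/

/-!
Quasi-shuffle algebras (Hoffman–Ihara).  We model the span `kA` of the alphabet
(with its commutative associative product `⋄`, written `*` in `L`) as a
non-unital commutative `k`-algebra `L`, and the word algebra `k⟨A⟩` as the
tensor algebra `TensorAlgebra k L`, in which a word `a₁⋯aₙ` is the product
`ι a₁ * ⋯ * ι aₙ`.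
-/

open TensorAlgebra

variable (k : Type*) [Field k]
variable {L : Type*} [NonUnitalCommRing L] [Module k L]
  [SMulCommClass k L L] [IsScalarTower k L L]

/-- The `⋄`-product of the letters of a nonempty block (junk value `0` on `[]`). -/
def blockProd : List L → L
  | [] => 0
  | a :: t => t.foldl (· * ·) a

/-- The Hoffman–Ihara operator `Ψ_f` on words, for `f = c₁t + c₂t² + ⋯`:
`Ψ_f(w) = Σ_{(i₁,…,i_m) composition of ℓ(w)} c_{i₁}⋯c_{i_m} I[w]`,
written via the recursion on the first block. -/
def psi (c : ℕ → k) : List L → TensorAlgebra k L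
  | [] => 1
  | a :: w => ∑ j ∈ Finset.range (w.length + 1),
      c (j + 1) • (TensorAlgebra.ι k (blockProd (a :: w.take j)) * psi c (w.drop j))
  termination_by l => l.length
  decreasing_by simp [List.length_drop] <;> omega

theorem PowerSeries.one_sub_mk_mul_mk_eq_one {R : Type*} [Ring R] (a b : ℕ → R)
    (ha : a 0 = 0) (hb_zero : b 0 = 1)
    (hb_succ : ∀ n, b (n + 1) = ∑ j ∈ Finset.range (n + 1), a (j + 1) * b (n - j)) :
    (1 - PowerSeries.mk a) * PowerSeries.mk b = 1 := by
  ext n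
  rw [sub_mul, one_mul, map_sub, PowerSeries.coeff_mul,
    Finset.Nat.sum_antidiagonal_eq_sum_range_succ_mk]
  simp only [PowerSeries.coeff_mk, PowerSeries.coeff_one]
  cases n with
  | zero => simp [ha, hb_zero]
  | succ m =>
    rw [Finset.sum_range_succ', ha, zero_mul, add_zero, hb_succ, if_neg m.succ_ne_zero,
      sub_eq_zero]
    refine Finset.sum_congr rfl fun j hj => ?_
    rw [show m + 1 - (j + 1) = m - j by omega]

omit [SMulCommClass k L L] [IsScalarTower k L L] in
theorem psi_replicate_succ (c : ℕ → k) (w : L) (n : ℕ) :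
    psi k c (List.replicate (n + 1) w) =
      ∑ j ∈ Finset.range (n + 1),
        c (j + 1) • (TensorAlgebra.ι k (blockProd (List.replicate (j + 1) w))
          * psi k c (List.replicate (n - j) w)) := by
  rw [List.replicate_succ, psi]
  refine Finset.sum_congr (by simp) fun j hj => ?_
  rw [Finset.mem_range] at hj
  rw [List.take_replicate, List.drop_replicate, min_eq_left (by omega),
    ← List.replicate_succ]

/-- The identity `Ψ_f(1/(1−λw)) = 1/(1−f_⋄(λw))`, stated as `(1 − f_⋄(λw)) · Ψ_f(1/(1−λw)) = 1`. -/
theorem stmt12 (c : ℕ → k) (w : L)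
    (F : TensorAlgebra k L →ₗ[k] TensorAlgebra k L)
    (hF : ∀ u : List L, F (word k u) = psi k c u) :
    (1 - PowerSeries.mk (fun n =>
        if n = 0 then 0 else c n • TensorAlgebra.ι k (blockProd (List.replicate n w))))
      * PowerSeries.mk (fun n => F (word k (List.replicate n w))) = 1 := by
  refine PowerSeries.one_sub_mk_mul_mk_eq_one _ _ (if_pos rfl) ?_ fun n => ?_
  · rw [hF, List.replicate_zero, psi]
  · simp only [hF, psi_replicate_succ, if_neg (Nat.succ_ne_zero _), smul_mul_assoc]
end

section
/- The multiple zeta values of repeated argument 2 satisfy ζ({2}ₙ) = π^{2n}/(2n+1)!, i.e. the nested sum Σ_{n₁>n₂>⋯>nₙ≥1} 1/(n₁²⋯nₙ²) equals π^{2n}/(2n+1)! for every n ≥ 0. -/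
/-
Expanding Euler's product `sin (π z) / (π z) = ∏ₖ (1 - z² / k²)` in `t = -z²` gives
`∏ₖ (1 + t / k²) = ∑ₙ eₙ tⁿ`, where `eₙ = ∑_{k₁ < ⋯ < kₙ} 1 / (k₁ ⋯ kₙ)²` is the `n`-th elementary
symmetric function of the family `(1 / k²)ₖ`, which is exactly `ζ({2}ₙ)`. Comparing with the
Taylor series `sin (π z) / (π z) = ∑ₙ (-z²)ⁿ π²ⁿ / (2n + 1)!` and using uniqueness of power-series
coefficients gives `ζ({2}ₙ) = π²ⁿ / (2n + 1)!`.
-/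

/-- The multiple zeta value `ζ(e₁,…,eₙ) = Σ_{n₁>n₂>⋯>nₙ≥1} 1/(n₁^{e₁}⋯nₙ^{eₙ})`,
as a sum over strictly decreasing tuples of positive integers
(`f 0 = n₁ > f 1 = n₂ > ⋯`); for `n = 0` it equals `1`. -/
noncomputable def mzv {n : ℕ} (e : Fin n → ℕ) : ℝ :=
  ∑' f : {f : Fin n → ℕ // StrictAnti f ∧ ∀ i, 0 < f i},
    ∏ i, (1 : ℝ) / (f.1 i : ℝ) ^ (e i)

open Filter Topology Finset

noncomputable def tsumEsymm {ι R : Type*} [CommSemiring R] [TopologicalSpace R]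
    (x : ι → R) (n : ℕ) : R :=
  ∑' s : Set.powersetCard ι n, ∏ i ∈ (s : Finset ι), x i

section

variable {ι R : Type*} [NormedCommRing R] [NormOneClass R] [CompleteSpace R]

lemma hasSum_pow_mul_tsumEsymm {x : ι → R} (hx : Summable (‖x ·‖)) (t : R) :
    HasSum (fun n ↦ t ^ n * tsumEsymm x n) (∏' i, (1 + t * x i)) := by
  have hsum : Summable fun s : Finset ι ↦ ∏ i ∈ s, t * x i :=
    summable_finsetProd_of_summable_norm <|
      (hx.mul_left ‖t‖).of_nonneg_of_le (fun _ ↦ norm_nonneg _) fun _ ↦ norm_mul_le _ _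
  rw [tprod_one_add hsum]
  refine hsum.hasSum.tsum_fiberwise card |>.congr_fun fun n ↦ ?_
  have hfiber := (summable_finsetProd_of_summable_norm hx).subtype (Set.powersetCard ι n)
  refine (hfiber.tsum_mul_left _).symm.trans (tsum_congr fun s ↦ ?_)
  rw [Function.comp_apply, prod_mul_distrib, prod_const, s.2]

end

lemma tsumEsymm_eq_tsum_orderEmbedding {ι R : Type*} [LinearOrder ι] [CommSemiring R]
    [TopologicalSpace R] (x : ι → R) (n : ℕ) :
    tsumEsymm x n = ∑' g : Fin n ↪o ι, ∏ i, x (g i) := by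
  rw [tsumEsymm, ← Set.powersetCard.ofFinEmbEquiv.tsum_eq]
  refine tsum_congr fun g ↦ ?_
  rw [Set.powersetCard.ofFinEmbEquiv_apply, Set.powersetCard.val_ofFinEmb, prod_map]
  rfl

def strictAntiPosEquivOrderEmbedding (n : ℕ) :
    {f : Fin n → ℕ // StrictAnti f ∧ ∀ i, 0 < f i} ≃ (Fin n ↪o ℕ) where
  toFun f := OrderEmbedding.ofStrictMono (fun i ↦ f.1 i.rev - 1) fun i j hij ↦ by
    have := f.2.1 (Fin.rev_lt_rev.mpr hij)
    have := f.2.2 i.rev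
    dsimp only
    omega
  invFun g := ⟨fun i ↦ g i.rev + 1, fun i j hij ↦ by simpa using Fin.rev_lt_rev.mpr hij,
    fun i ↦ Nat.succ_pos _⟩
  left_inv f := by
    ext i
    change f.1 i.rev.rev - 1 + 1 = f.1 i
    have := f.2.2 i
    rw [Fin.rev_rev]
    omega
  right_inv g := by
    ext i
    simp

lemma mzv_two_eq_tsumEsymm (n : ℕ) :
    mzv (fun _ : Fin n ↦ 2) = tsumEsymm (fun k : ℕ ↦ 1 / ((k : ℝ) + 1) ^ 2) n := by
  rw [mzv, tsumEsymm_eq_tsum_orderEmbedding, ← (strictAntiPosEquivOrderEmbedding n).symm.tsum_eq]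
  refine tsum_congr fun g ↦ ?_
  rw [← Equiv.prod_comp Fin.revPerm]
  simp [strictAntiPosEquivOrderEmbedding]

lemma eq_of_hasSum_pow_mul {𝕜 : Type*} [NontriviallyNormedField 𝕜] {F : 𝕜 → 𝕜} {c d : ℕ → 𝕜}
    (hc : ∀ᶠ t in 𝓝 0, HasSum (fun n ↦ t ^ n * c n) (F t))
    (hd : ∀ᶠ t in 𝓝 0, HasSum (fun n ↦ t ^ n * d n) (F t)) : c = d := by
  have hasFPowerSeriesAt {c : ℕ → 𝕜} (hc : ∀ᶠ t in 𝓝 0, HasSum (fun n ↦ t ^ n * c n) (F t)) :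
      HasFPowerSeriesAt F (.ofScalars 𝕜 c) 0 := by
    simpa [hasFPowerSeriesAt_iff, FormalMultilinearSeries.coeff_ofScalars] using hc
  exact FormalMultilinearSeries.ofScalars_series_injective 𝕜 𝕜 <|
    (hasFPowerSeriesAt hc).eq_formalMultilinearSeries (hasFPowerSeriesAt hd)

open Complex in
lemma hasSum_sin_pi_mul_div {z : ℂ} (hz : z ≠ 0) :
    HasSum (fun n ↦ (-z ^ 2) ^ n * (Real.pi ^ (2 * n) / (2 * n + 1).factorial))
      (sin (Real.pi * z) / (Real.pi * z)) := by
  refine (hasSum_sin (Real.pi * z)).div_const _ |>.congr_fun fun n ↦ ?_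
  have : (Real.pi : ℂ) * z ≠ 0 := mul_ne_zero (ofReal_ne_zero.mpr Real.pi_ne_zero) hz
  field_simp
  ring

open Complex in
lemma hasSum_pow_mul_pi_pow_div_factorial (t : ℂ) :
    HasSum (fun n ↦ t ^ n * (Real.pi ^ (2 * n) / (2 * n + 1).factorial))
      (∏' k : ℕ, (1 + t * (1 / ((k : ℂ) + 1) ^ 2))) := by
  rcases eq_or_ne t 0 with rfl | ht
  · simpa using hasSum_single (f := fun n : ℕ ↦
      (0 : ℂ) ^ n * (Real.pi ^ (2 * n) / (2 * n + 1).factorial)) 0 fun n hn ↦ by simp [hn]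
  obtain ⟨z, hz⟩ := IsAlgClosed.exists_pow_nat_eq (-t) two_pos
  have hz0 : z ≠ 0 := by rintro rfl; simp_all
  have hprod : ∀ k : ℕ, 1 + sineTerm z k = 1 + t * (1 / ((k : ℂ) + 1) ^ 2) := fun k ↦ by
    rw [sineTerm, hz]; ring
  have hmul := multipliable_sineTerm z
  simp only [hprod] at hmul
  rw [tendsto_nhds_unique hmul.hasProd.tendsto_prod_nat
    ((tendsto_euler_sin_prod' hz0).congr fun N ↦ prod_congr rfl fun k _ ↦ hprod k)]
  simpa [hz] using hasSum_sin_pi_mul_div hz0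

lemma tsumEsymm_one_div_add_one_sq (n : ℕ) :
    tsumEsymm (fun k : ℕ ↦ 1 / ((k : ℝ) + 1) ^ 2) n
      = Real.pi ^ (2 * n) / ((2 * n + 1).factorial : ℝ) := by
  have hx : Summable fun k : ℕ ↦ ‖1 / ((k : ℂ) + 1) ^ 2‖ := by
    simpa using summable_pow_div_add (1 : ℂ) 2 1 one_lt_two
  have hesymm := hasSum_pow_mul_tsumEsymm hx
  have heuler := hasSum_pow_mul_pi_pow_div_factorial
  have hcoeff := eq_of_hasSum_pow_mul (.of_forall hesymm) (.of_forall heuler)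
  have hcast : ((tsumEsymm (fun k : ℕ ↦ 1 / ((k : ℝ) + 1) ^ 2) n : ℝ) : ℂ)
      = tsumEsymm (fun k : ℕ ↦ 1 / ((k : ℂ) + 1) ^ 2) n := by
    rw [tsumEsymm, tsumEsymm, Complex.ofReal_tsum]
    push_cast
    rfl
  exact_mod_cast hcast.trans (congrFun hcoeff n)

/-- `ζ({2}ₙ) = π^{2n}/(2n+1)!` for every `n ≥ 0`. -/
theorem stmt14 (n : ℕ) :
    mzv (fun _ : Fin n => 2) = Real.pi ^ (2 * n) / ((2 * n + 1).factorial : ℝ) := by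
  rw [mzv_two_eq_tsumEsymm, tsumEsymm_one_div_add_one_sq]
end

section
/- For a single letter u in a quasi-shuffle algebra, the concatenation power uⁿ equals Σ over integer partitions λ ⊢ n of (ε_λ / z_λ) · ∏_{j=1}^{ℓ(λ)} p_{λ_j}(r) · u^{⋄λ₁} ∗_r ⋯ ∗_r u^{⋄λ_{ℓ(λ)}}, where ε_λ = (−1)^{n−ℓ(λ)}, z_λ = ∏_i m_i(λ)! i^{m_i(λ)}, and p_a(r) = (1−r)^a − (−r)^a. -/
/-!
Quasi-shuffle algebras (Hoffman–Ihara).  We model the span `kA` of the alphabet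
(with its commutative associative product `⋄`, written `*` in `L`) as a
non-unital commutative `k`-algebra `L`, and the word algebra `k⟨A⟩` as the
tensor algebra `TensorAlgebra k L`, in which a word `a₁⋯aₙ` is the product
`ι a₁ * ⋯ * ι aₙ`.
-/

open TensorAlgebra

variable (k : Type*) [Field k]
variable {L : Type*} [NonUnitalCommRing L] [Module k L]
  [SMulCommClass k L L] [IsScalarTower k L L]

/-- Iterated product `x₁ ∗ x₂ ∗ ⋯ ∗ x_l` of a list (empty product `1`). -/
def iterProd {M : Type*} [One M] (f : M → M → M) : List M → M
  | [] => 1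
  | [x] => x
  | x :: y :: t => f x (iterProd f (y :: t))

/-!
Work in the free quasi-shuffle algebra on words over `ℕ+`, the letter `m` standing for `u^{⋄m}`.
There left `∗_r`-multiplications by letters commute, so the `∗_r`-product of a multiset of letters
makes sense. With `q_m = r^m - (r-1)^m = (-1)^(m-1) p_m(r)` and `1ⁿ` the word of `n` ones, the
Newton-type identity `∑_{m=1}^n q_m · (m ∗_r 1ⁿ⁻ᵐ) = n · 1ⁿ` holds because `q` satisfies the linear
recursion whose coefficients `1, 1 - 2r, r² - r` are those of the recursion of `∗_r`. The partition
sum `∑_{λ ⊢ n} (∏_j q_{λ_j} / z_λ) λ₁ ∗_r ⋯ ∗_r λ_ℓ` satisfies the same recursion, since removing a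
part `m` from `λ` divides `z_λ` by `m · m_m(λ)` and `∑_m m · m_m(λ) = n`; hence it equals `1ⁿ`.
The linear map sending the word `m₁⋯m_l` to `u^{⋄m₁}⋯u^{⋄m_l}` intertwines letter multiplication
with `∗_r`, which transports the identity to `k⟨A⟩`.
-/

lemma Nat.toPNat'_add_one {m : ℕ} (hm : 0 < m) : m.toPNat' + 1 = (m + 1).toPNat' :=
  PNat.eq (by simp [Nat.toPNat'_coe, hm])

lemma Nat.Partition.sum_Icc_sum_cons {M : Type*} [AddCommMonoid M] (n : ℕ)
    (F : ℕ → Multiset ℕ → M) :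
    ∑ m ∈ Finset.Icc 1 n, ∑ Q : (n - m).Partition, F m (m ::ₘ Q.parts)
      = ∑ P : n.Partition, ∑ m ∈ P.parts.toFinset, F m P.parts := by
  calc ∑ m ∈ Finset.Icc 1 n, ∑ Q : (n - m).Partition, F m (m ::ₘ Q.parts)
      = ∑ m ∈ Finset.Icc 1 n, ∑ P : n.Partition, if m ∈ P.parts then F m P.parts else 0 := by
        refine Finset.sum_congr rfl fun m hm => ?_
        obtain ⟨hm1, hmn⟩ := Finset.mem_Icc.1 hm
        rw [← Finset.sum_filter, Finset.sum_subtype _ (p := fun P : n.Partition => m ∈ P.parts)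
          (by simp), ← (Nat.Partition.partitionWithPartEquiv hm1 hmn).symm.sum_comp]
        simp
    _ = ∑ P : n.Partition, ∑ m ∈ Finset.Icc 1 n, if m ∈ P.parts then F m P.parts else 0 :=
        Finset.sum_comm
    _ = ∑ P : n.Partition, ∑ m ∈ P.parts.toFinset, F m P.parts := by
        refine Finset.sum_congr rfl fun P _ => ?_
        rw [← Finset.sum_filter]
        congr 1
        ext m
        simp only [Finset.mem_filter, Finset.mem_Icc, Multiset.mem_toFinset]
        exact ⟨fun h => h.2, fun h => ⟨⟨P.parts_pos h, P.le_of_mem_parts h⟩, h⟩⟩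

namespace QuasiShuffle

open Finsupp

noncomputable section FreeModel

variable (R : Type*) [CommRing R] {S : Type*}

variable (S) in
abbrev WordModule := List S →₀ R

def consLetter (b : S) : WordModule R S →ₗ[R] WordModule R S := lmapDomain R R (b :: ·)

@[simp] lemma consLetter_single (b : S) (c : List S) (x : R) :
    consLetter R b (single c x) = single (b :: c) x := by
  simp [consLetter]

variable [AddCommSemigroup S]

def mergeHead (m : S) : WordModule R S →ₗ[R] WordModule R S :=
  Finsupp.lift (WordModule R S) R (List S) fun
    | [] => 0
    | d :: t => single ((m + d) :: t) 1

variable {R} (r : R)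

-- `a ∗_r c` for a letter `a` and a word `c`, following the recursion of `∗_r`; `mergeHead` plays
-- the role of `D`.
def letterMulWord (a : S) : List S → WordModule R S
  | [] => single [a] 1
  | d :: t => single (a :: d :: t) 1 + consLetter R d (letterMulWord a t)
      + (1 - 2 * r) • single ((a + d) :: t) 1 + (r ^ 2 - r) • mergeHead R (a + d) (single t 1)

def letterMul (a : S) : WordModule R S →ₗ[R] WordModule R S :=
  Finsupp.lift (WordModule R S) R (List S) (letterMulWord r a)

variable {r}

@[simp] lemma mergeHead_single_nil (m : S) (x : R) :
    mergeHead R m (single ([] : List S) x) = 0 := by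
  simp [mergeHead]

@[simp] lemma mergeHead_single_cons (m d : S) (t : List S) (x : R) :
    mergeHead R m (single (d :: t) x) = single ((m + d) :: t) x := by
  simp [mergeHead, smul_single]

@[simp] lemma letterMul_single_one (a : S) (c : List S) :
    letterMul r a (single c 1) = letterMulWord r a c := by
  simp [letterMul]

lemma mergeHead_consLetter (m d : S) (x : WordModule R S) :
    mergeHead R m (consLetter R d x) = consLetter R (m + d) x := by
  induction x using Finsupp.induction_linear <;> simp_all

lemma mergeHead_mergeHead (m p : S) (x : WordModule R S) :
    mergeHead R m (mergeHead R p x) = mergeHead R (m + p) x := by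
  induction x using Finsupp.induction_linear with
  | zero => simp
  | add x y hx hy => simp [hx, hy]
  | single c x => cases c <;> simp [add_assoc]

lemma letterMul_consLetter (a d : S) (x : WordModule R S) :
    letterMul r a (consLetter R d x)
      = consLetter R a (consLetter R d x) + consLetter R d (letterMul r a x)
        + (1 - 2 * r) • consLetter R (a + d) x + (r ^ 2 - r) • mergeHead R (a + d) x := by
  induction x using Finsupp.induction_linear with
  | zero => simp
  | add x y hx hy => simp only [map_add, hx, hy]; module
  | single c x =>
    simp only [← smul_single_one c x, map_smul, consLetter_single, letterMul_single_one,
      letterMulWord]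
    module

-- The `(r ^ 2 - r)`-part of `letterMul_comm_single` at the word `d :: t`.
lemma letterMul_mergeHead_symm (a b d : S) (t : List S) :
    consLetter R b (mergeHead R (a + d) (single t 1))
        + mergeHead R (a + d) (letterMul r b (single t 1))
        + letterMul r a (mergeHead R (b + d) (single t 1))
      = consLetter R a (mergeHead R (b + d) (single t 1))
        + mergeHead R (b + d) (letterMul r a (single t 1))
        + letterMul r b (mergeHead R (a + d) (single t 1)) := by
  cases t with
  | nil => simp [letterMulWord, add_right_comm a d b, add_right_comm b d a, add_comm a b]
  | cons e t =>
    rw [← consLetter_single]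
    simp only [mergeHead_consLetter, letterMul_consLetter, map_add, map_smul, mergeHead_mergeHead]
    rw [show a + d + b = b + d + a by ac_rfl, show a + d + (b + e) = b + d + (a + e) by ac_rfl,
      show a + (b + d + e) = b + (a + d + e) by ac_rfl]
    module

lemma letterMul_comm_single (a b : S) (c : List S) :
    letterMul r a (letterMul r b (single c 1)) = letterMul r b (letterMul r a (single c 1)) := by
  induction c with
  | nil =>
    simp only [letterMul_single_one, letterMulWord, consLetter_single, mergeHead_single_nil,
      smul_zero, add_zero, add_comm a b]
    module
  | cons d t ih =>
    have h := letterMul_mergeHead_symm (r := r) a b d t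
    rw [← consLetter_single]
    simp only [letterMul_consLetter, map_add, map_smul, mergeHead_consLetter, ih]
    rw [add_comm a b, add_left_comm a b d]
    linear_combination (norm := module) (r ^ 2 - r) • h

lemma letterMul_comm (a b : S) (x : WordModule R S) :
    letterMul r a (letterMul r b x) = letterMul r b (letterMul r a x) := by
  induction x using Finsupp.induction_linear with
  | zero => simp
  | add x y hx hy => simp only [map_add, hx, hy]
  | single c x => simp only [← smul_single_one c x, map_smul, letterMul_comm_single]

instance : LeftCommutative (fun (a : S) (x : WordModule R S) => letterMul r a x) :=
  ⟨letterMul_comm⟩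

variable (r) in
def letterProd (s : Multiset S) : WordModule R S :=
  s.foldr (fun a x => letterMul r a x) (single [] 1)

@[simp] lemma letterProd_cons (a : S) (s : Multiset S) :
    letterProd r (a ::ₘ s) = letterMul r a (letterProd r s) :=
  Multiset.foldr_cons ..

end FreeModel

noncomputable section Newton

variable {R : Type*} [CommRing R] (r : R)

-- `r` and `r - 1` are the roots of `t² - (2r - 1) t + (r² - r)`, whose coefficients are those
-- of the recursion of `∗_r`.
def newtonCoeff (m : ℕ) : R := r ^ m - (r - 1) ^ m

@[simp] lemma newtonCoeff_zero : newtonCoeff r 0 = 0 := by simp [newtonCoeff]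

@[simp] lemma newtonCoeff_one : newtonCoeff r 1 = 1 := by simp [newtonCoeff]

lemma newtonCoeff_add_two (m : ℕ) :
    newtonCoeff r (m + 2)
      = (2 * r - 1) * newtonCoeff r (m + 1) - (r ^ 2 - r) * newtonCoeff r m := by
  simp only [newtonCoeff]; ring

lemma sum_newtonCoeff_smul_telescope {M : Type*} [AddCommGroup M] [Module R M] (g : ℕ → M)
    (N : ℕ) :
    ∑ m ∈ Finset.Icc 1 N,
        newtonCoeff r m • (g m + (1 - 2 * r) • g (m + 1) + (r ^ 2 - r) • g (m + 2))
      = g 1 - newtonCoeff r (N + 1) • g (N + 1) + ((r ^ 2 - r) * newtonCoeff r N) • g (N + 2) := by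
  induction N with
  | zero => simp
  | succ N ih =>
    rw [Finset.sum_Icc_succ_top (by omega), ih, newtonCoeff_add_two]
    module

variable (R)

def onesWord (n : ℕ) : WordModule R ℕ+ := single (List.replicate n 1) 1

/-- The word `c 1ⁿ⁻ᶜ` of weight `n`, and `0` when `c > n`. -/
def headOnesWord (n c : ℕ) : WordModule R ℕ+ :=
  if c ≤ n then single (c.toPNat' :: List.replicate (n - c) 1) 1 else 0

variable {R}

lemma onesWord_succ (n : ℕ) : onesWord R (n + 1) = consLetter R 1 (onesWord R n) := by
  simp [onesWord, List.replicate_succ]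

lemma letterMul_onesWord_succ_sub {m n : ℕ} (hm : 1 ≤ m) (hmn : m ≤ n) :
    letterMul r m.toPNat' (onesWord R (n + 1 - m))
      = consLetter R 1 (letterMul r m.toPNat' (onesWord R (n - m)))
        + (headOnesWord R (n + 1) m + (1 - 2 * r) • headOnesWord R (n + 1) (m + 1)
          + (r ^ 2 - r) • headOnesWord R (n + 1) (m + 2)) := by
  have h0 : headOnesWord R (n + 1) m
      = consLetter R m.toPNat' (consLetter R 1 (onesWord R (n - m))) := by
    simp [headOnesWord, hmn.trans n.le_succ, onesWord, show n + 1 - m = n - m + 1 by omega,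
      List.replicate_succ]
  have h1 : headOnesWord R (n + 1) (m + 1) = consLetter R (m.toPNat' + 1) (onesWord R (n - m)) := by
    simp [headOnesWord, hmn, onesWord, Nat.toPNat'_add_one hm]
  have h2 : headOnesWord R (n + 1) (m + 2) = mergeHead R (m.toPNat' + 1) (onesWord R (n - m)) := by
    rcases hmn.lt_or_eq with hlt | rfl
    · obtain ⟨l, hl⟩ : ∃ l, n - m = l + 1 := ⟨n - m - 1, by omega⟩
      rw [hl, onesWord_succ, mergeHead_consLetter, onesWord, consLetter_single,
        Nat.toPNat'_add_one hm, Nat.toPNat'_add_one (by omega)]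
      simp [headOnesWord, show m + 2 ≤ n + 1 by omega, show n + 1 - (m + 2) = l by omega]
    · simp [headOnesWord, onesWord]
  rw [show n + 1 - m = n - m + 1 by omega, onesWord_succ, letterMul_consLetter, h0, h1, h2]
  abel

lemma sum_newtonCoeff_smul_letterMul_onesWord (n : ℕ) :
    ∑ m ∈ Finset.Icc 1 n, newtonCoeff r m • letterMul r m.toPNat' (onesWord R (n - m))
      = (n : R) • onesWord R n := by
  induction n with
  | zero => simp
  | succ n ih =>
    have hsplit : ∀ m ∈ Finset.Icc 1 n,
        newtonCoeff r m • letterMul r m.toPNat' (onesWord R (n + 1 - m))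
          = consLetter R 1 (newtonCoeff r m • letterMul r m.toPNat' (onesWord R (n - m)))
            + newtonCoeff r m • (headOnesWord R (n + 1) m
              + (1 - 2 * r) • headOnesWord R (n + 1) (m + 1)
              + (r ^ 2 - r) • headOnesWord R (n + 1) (m + 2)) := fun m hm => by
      obtain ⟨hm1, hmn⟩ := Finset.mem_Icc.1 hm
      rw [letterMul_onesWord_succ_sub r hm1 hmn, smul_add, map_smul]
    have hfirst : headOnesWord R (n + 1) 1 = onesWord R (n + 1) := by
      rw [headOnesWord, if_pos (by omega), onesWord, Nat.add_sub_cancel, List.replicate_succ]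
      rfl
    have hlast : letterMul r (n + 1).toPNat' (onesWord R (n + 1 - (n + 1)))
        = headOnesWord R (n + 1) (n + 1) := by
      simp [headOnesWord, onesWord, letterMulWord]
    have hout : headOnesWord R (n + 1) (n + 2) = 0 := by simp [headOnesWord]
    rw [Finset.sum_Icc_succ_top (by omega), Finset.sum_congr rfl hsplit, Finset.sum_add_distrib,
      ← map_sum, ih, sum_newtonCoeff_smul_telescope, hfirst, hlast, hout, map_smul, ← onesWord_succ]
    push_cast
    module

lemma newtonCoeff_succ (i : ℕ) :
    newtonCoeff r (i + 1) = (-1) ^ i * ((1 - r) ^ (i + 1) - (-r) ^ (i + 1)) := by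
  have hsign : (-1 : R) ^ i * (-1) ^ (i + 1) = -1 := by
    rw [← pow_add]; exact Odd.neg_one_pow ⟨i, by ring⟩
  rw [newtonCoeff, neg_pow r, ← neg_sub r 1, neg_pow (r - 1)]
  linear_combination (r ^ (i + 1) - (r - 1) ^ (i + 1)) * hsign

lemma prod_map_newtonCoeff {s : Multiset ℕ} (hs : ∀ i ∈ s, 0 < i) :
    (s.map (newtonCoeff r)).prod
      = (-1) ^ (s.sum - Multiset.card s) * (s.map fun j => (1 - r) ^ j - (-r) ^ j).prod := by
  induction s using Multiset.induction with
  | empty => simp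
  | cons m t ih =>
    obtain ⟨i, rfl⟩ : ∃ i, m = i + 1 := ⟨m - 1, by have := hs m (by simp); omega⟩
    have hcard : Multiset.card t ≤ t.sum := by
      simpa using Multiset.card_nsmul_le_sum fun x hx => hs x (Multiset.mem_cons_of_mem hx)
    rw [Multiset.map_cons, Multiset.prod_cons, ih fun x hx => hs x (Multiset.mem_cons_of_mem hx),
      newtonCoeff_succ, Multiset.sum_cons, Multiset.card_cons, Multiset.map_cons,
      Multiset.prod_cons,
      show i + 1 + t.sum - (Multiset.card t + 1) = i + (t.sum - Multiset.card t) by omega, pow_add]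
    ring

end Newton

noncomputable section Partitions

def zFactor (s : Multiset ℕ) : ℕ := ∏ i ∈ s.toFinset, (s.count i).factorial * i ^ s.count i

lemma zFactor_cons (m : ℕ) (t : Multiset ℕ) :
    zFactor (m ::ₘ t) = m * (t.count m + 1) * zFactor t := by
  have hext : zFactor t = ∏ i ∈ insert m t.toFinset, (t.count i).factorial * i ^ t.count i := by
    refine Finset.prod_subset (Finset.subset_insert m t.toFinset) fun i _ hi => ?_
    simp [Multiset.count_eq_zero.2 (Multiset.mem_toFinset.not.1 hi)]
  have hrest : ∀ i ∈ (insert m t.toFinset).erase m,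
      ((m ::ₘ t).count i).factorial * i ^ (m ::ₘ t).count i
        = (t.count i).factorial * i ^ t.count i := fun i hi => by
    rw [Multiset.count_cons_of_ne (Finset.ne_of_mem_erase hi)]
  rw [zFactor, hext, Multiset.toFinset_cons,
    ← Finset.mul_prod_erase _ _ (Finset.mem_insert_self _ _),
    ← Finset.mul_prod_erase _ _ (Finset.mem_insert_self _ _), Finset.prod_congr rfl hrest,
    Multiset.count_cons_self, Nat.factorial_succ, pow_succ]
  ring

lemma zFactor_pos {s : Multiset ℕ} (hs : ∀ i ∈ s, 0 < i) : 0 < zFactor s :=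
  Finset.prod_pos fun i hi =>
    Nat.mul_pos (Nat.factorial_pos _) (pow_pos (hs i (Multiset.mem_toFinset.1 hi)) _)

variable {K : Type*} [Field K] (r : K)

def partitionCoeff (s : Multiset ℕ) : K := (s.map (newtonCoeff r)).prod / zFactor s

lemma partitionCoeff_eq {s : Multiset ℕ} (hs : ∀ i ∈ s, 0 < i) :
    partitionCoeff r s = (-1) ^ (s.sum - Multiset.card s) / (zFactor s : K)
      * (s.map fun j => (1 - r) ^ j - (-r) ^ j).prod := by
  rw [partitionCoeff, prod_map_newtonCoeff r hs, div_mul_eq_mul_div]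

variable {r} [CharZero K]

lemma newtonCoeff_mul_partitionCoeff {m : ℕ} (hm : 0 < m) {t : Multiset ℕ} (ht : ∀ i ∈ t, 0 < i) :
    newtonCoeff r m * partitionCoeff r t
      = ((m * (m ::ₘ t).count m : ℕ) : K) * partitionCoeff r (m ::ₘ t) := by
  have hz : (zFactor t : K) ≠ 0 := Nat.cast_ne_zero.2 (zFactor_pos ht).ne'
  have hm' : (m : K) ≠ 0 := Nat.cast_ne_zero.2 hm.ne'
  simp only [partitionCoeff, zFactor_cons, Multiset.map_cons, Multiset.prod_cons,
    Multiset.count_cons_self]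
  push_cast
  field_simp

variable (r) in
def partitionExpansion (n : ℕ) : WordModule K ℕ+ :=
  ∑ P : n.Partition, partitionCoeff r P.parts • letterProd r (P.parts.map Nat.toPNat')

lemma natCast_smul_partitionExpansion (n : ℕ) :
    (n : K) • partitionExpansion r n
      = ∑ m ∈ Finset.Icc 1 n,
          newtonCoeff r m • letterMul r m.toPNat' (partitionExpansion r (n - m)) := by
  let F : ℕ → Multiset ℕ → WordModule K ℕ+ := fun m s =>
    ((m * s.count m : ℕ) * partitionCoeff r s) • letterProd r (s.map Nat.toPNat')
  have hterm : ∀ m ∈ Finset.Icc 1 n,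
      newtonCoeff r m • letterMul r m.toPNat' (partitionExpansion r (n - m))
        = ∑ Q : (n - m).Partition, F m (m ::ₘ Q.parts) := by
    intro m hm
    simp only [partitionExpansion, map_sum, map_smul, Finset.smul_sum, smul_smul, F,
      Multiset.map_cons, letterProd_cons]
    refine Finset.sum_congr rfl fun Q _ => ?_
    rw [newtonCoeff_mul_partitionCoeff (Finset.mem_Icc.1 hm).1 fun i hi => Q.parts_pos hi]
  rw [Finset.sum_congr rfl hterm, Nat.Partition.sum_Icc_sum_cons, partitionExpansion,
    Finset.smul_sum]
  refine Finset.sum_congr rfl fun P _ => ?_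
  simp only [F, ← Finset.sum_smul, ← Finset.sum_mul, smul_smul]
  congr 2
  rw [← Nat.cast_sum]
  conv_lhs => rw [← P.parts_sum, Finset.sum_multiset_count]
  simp [mul_comm]

lemma partitionExpansion_eq_onesWord (n : ℕ) : partitionExpansion r n = onesWord K n := by
  induction n using Nat.strong_induction_on with
  | _ n ih =>
    rcases n.eq_zero_or_pos with rfl | hn
    · simp [partitionExpansion, partitionCoeff, zFactor, letterProd, onesWord,
        Nat.Partition.partition_zero_parts]
    · refine smul_right_injective _ (Nat.cast_ne_zero.2 hn.ne' : (n : K) ≠ 0) ?_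
      simp only [natCast_smul_partitionExpansion]
      rw [← sum_newtonCoeff_smul_letterMul_onesWord]
      refine Finset.sum_congr rfl fun m hm => ?_
      rw [ih _ (Nat.sub_lt hn (Finset.mem_Icc.1 hm).1)]

end Partitions

noncomputable section Transfer

variable {k} {L : Type*} [NonUnitalCommRing L] [Module k L]

@[simp] lemma word_nil : word k ([] : List L) = 1 := rfl

lemma word_cons (a : L) (v : List L) : word k (a :: v) = ι k a * word k v := by
  simp [word]

structure IsHeadAction (D : L → TensorAlgebra k L →ₗ[k] TensorAlgebra k L) : Prop where
  map_one : ∀ a, D a 1 = 0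
  map_ι_mul_word : ∀ a c v, D a (ι k c * word k v) = ι k (a * c) * word k v

structure IsInterpolatedProduct (r : k) (D : L → TensorAlgebra k L →ₗ[k] TensorAlgebra k L)
    (mr : TensorAlgebra k L →ₗ[k] TensorAlgebra k L →ₗ[k] TensorAlgebra k L) : Prop
    extends IsHeadAction D where
  one_mr : ∀ x, mr 1 x = x
  mr_one : ∀ x, mr x 1 = x
  cons_mr_cons : ∀ a b v w,
    mr (word k (a :: v)) (word k (b :: w))
      = ι k a * mr (word k v) (word k (b :: w)) + ι k b * mr (word k (a :: v)) (word k w)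
        + (1 - 2 * r) • (ι k (a * b) * mr (word k v) (word k w))
        + (r ^ 2 - r) • D (a * b) (mr (word k v) (word k w))

variable {S : Type*} (f : S → L)

variable (k) in
def wordMap : WordModule k S →ₗ[k] TensorAlgebra k L :=
  Finsupp.lift (TensorAlgebra k L) k (List S) fun c => word k (c.map f)

@[simp] lemma wordMap_single_one (c : List S) : wordMap k f (single c 1) = word k (c.map f) := by
  simp [wordMap]

lemma wordMap_consLetter (b : S) (x : WordModule k S) :
    wordMap k f (consLetter k b x) = ι k (f b) * wordMap k f x := by
  induction x using Finsupp.induction_linear with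
  | zero => simp
  | add x y hx hy => simp only [map_add, hx, hy, mul_add]
  | single c x =>
    rw [← smul_single_one c x, map_smul, map_smul, map_smul, consLetter_single, wordMap_single_one,
      wordMap_single_one, List.map_cons, word_cons, mul_smul_comm]

variable [AddCommSemigroup S] {f} {D : L → TensorAlgebra k L →ₗ[k] TensorAlgebra k L}

lemma wordMap_mergeHead (hD : IsHeadAction D) (hf : ∀ a b, f (a + b) = f a * f b) (m : S)
    (x : WordModule k S) : wordMap k f (mergeHead k m x) = D (f m) (wordMap k f x) := by
  induction x using Finsupp.induction_linear with
  | zero => simp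
  | add x y hx hy => simp only [map_add, hx, hy]
  | single c x =>
    rw [← smul_single_one c x, map_smul, map_smul, map_smul]
    cases c with
    | nil => simp [hD.map_one]
    | cons d t => simp [word_cons, hD.map_ι_mul_word, hf]

variable {r : k} {mr : TensorAlgebra k L →ₗ[k] TensorAlgebra k L →ₗ[k] TensorAlgebra k L}

lemma wordMap_letterMul (hmr : IsInterpolatedProduct r D mr) (hf : ∀ a b, f (a + b) = f a * f b)
    (a : S) (x : WordModule k S) :
    wordMap k f (letterMul r a x) = mr (ι k (f a)) (wordMap k f x) := by
  have hword : ∀ c, wordMap k f (letterMulWord r a c) = mr (ι k (f a)) (word k (c.map f)) := by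
    intro c
    induction c with
    | nil => simp [letterMulWord, word_cons, hmr.mr_one]
    | cons d t ih =>
      have hcons := hmr.cons_mr_cons (f a) (f d) [] (t.map f)
      simp only [word_cons, word_nil, mul_one, hmr.one_mr] at hcons
      simp only [letterMulWord, map_add, map_smul, wordMap_single_one, wordMap_consLetter, ih,
        wordMap_mergeHead hmr.toIsHeadAction hf, List.map_cons, word_cons, hf, hcons]
  induction x using Finsupp.induction_linear with
  | zero => simp
  | add x y hx hy => simp only [map_add, hx, hy]
  | single c x =>
    rw [← smul_single_one c x, map_smul, map_smul, map_smul, map_smul, letterMul_single_one, hword,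
      wordMap_single_one]

lemma wordMap_letterProd (hmr : IsInterpolatedProduct r D mr) (hf : ∀ a b, f (a + b) = f a * f b)
    (l : List S) :
    wordMap k f (letterProd r (l : Multiset S))
      = iterProd (fun x y => mr x y) (l.map (ι k ∘ f)) := by
  induction l with
  | nil => simp [letterProd, iterProd]
  | cons a t ih =>
    rw [← Multiset.cons_coe, letterProd_cons, wordMap_letterMul hmr hf, ih]
    cases t with
    | nil => simp [iterProd, hmr.mr_one]
    | cons b t => simp [iterProd]

end Transfer

end QuasiShuffle

section BlockProd

variable {L : Type*} [NonUnitalCommRing L]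

lemma blockProd_replicate_add_two (u : L) (m : ℕ) :
    blockProd (List.replicate (m + 2) u) = blockProd (List.replicate (m + 1) u) * u := by
  rw [List.replicate_succ, List.replicate_succ, blockProd, blockProd, ← List.replicate_succ,
    List.replicate_succ', List.foldl_append]
  rfl

lemma blockProd_replicate_add {a b : ℕ} (ha : 0 < a) (hb : 0 < b) (u : L) :
    blockProd (List.replicate (a + b) u)
      = blockProd (List.replicate a u) * blockProd (List.replicate b u) := by
  induction b, hb using Nat.le_induction with
  | base =>
    obtain ⟨m, rfl⟩ : ∃ m, a = m + 1 := ⟨a - 1, by omega⟩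
    exact blockProd_replicate_add_two u m
  | succ b hb ih =>
    obtain ⟨m, rfl⟩ : ∃ m, b = m + 1 := ⟨b - 1, by omega⟩
    rw [show a + (m + 1 + 1) = a + m + 2 by omega, blockProd_replicate_add_two,
      show a + m + 1 = a + (m + 1) by omega, ih, blockProd_replicate_add_two, mul_assoc]

end BlockProd

open QuasiShuffle in
/--
For a single letter `u`,
`uⁿ = Σ_{λ⊢n} (ε_λ/z_λ) Π_j p_{λ_j}(r) · u^{⋄λ₁} ∗_r ⋯ ∗_r u^{⋄λ_{ℓ(λ)}}`,
where `ε_λ = (−1)^{n−ℓ(λ)}`, `z_λ = Π_i m_i(λ)! i^{m_i(λ)}`, and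
`p_a(r) = (1−r)^a − (−r)^a`.  Here `uⁿ` is the word of `n` copies of `u`,
`u^{⋄m} = blockProd` of `m` copies of `u`, and `mr = ∗_r` is the interpolated
product, given by its recursion (with `D a` the first-letter `⋄`-action).
-/
theorem stmt17 [CharZero k] (r : k) (n : ℕ) (u : L)
    (D : L → TensorAlgebra k L →ₗ[k] TensorAlgebra k L)
    (hD1 : ∀ a : L, D a 1 = 0)
    (hDw : ∀ (a c : L) (v : List L),
      D a (TensorAlgebra.ι k c * word k v) = TensorAlgebra.ι k (a * c) * word k v)
    (mr : TensorAlgebra k L →ₗ[k] TensorAlgebra k L →ₗ[k] TensorAlgebra k L)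
    (hmrl : ∀ x, mr 1 x = x) (hmrr : ∀ x, mr x 1 = x)
    (hmrrec : ∀ (a b : L) (v w : List L),
      mr (word k (a :: v)) (word k (b :: w))
        = TensorAlgebra.ι k a * mr (word k v) (word k (b :: w))
          + TensorAlgebra.ι k b * mr (word k (a :: v)) (word k w)
          + (1 - 2 * r) • (TensorAlgebra.ι k (a * b) * mr (word k v) (word k w))
          + (r ^ 2 - r) • D (a * b) (mr (word k v) (word k w))) :
    word k (List.replicate n u)
      = ∑ P : n.Partition,
          (((-1 : k) ^ (n - P.parts.card)
              / ((∏ i ∈ P.parts.toFinset,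
                  (P.parts.count i).factorial * i ^ (P.parts.count i) : ℕ) : k))
            * (P.parts.map fun j => (1 - r) ^ j - (-r) ^ j).prod)
            • iterProd (fun x y => mr x y)
                ((P.parts.sort (· ≤ ·)).map fun j =>
                  TensorAlgebra.ι k (blockProd (List.replicate j u))) := by
  have hmr : IsInterpolatedProduct r D mr := ⟨⟨hD1, hDw⟩, hmrl, hmrr, hmrrec⟩
  let f : ℕ+ → L := fun p => blockProd (List.replicate p u)
  have hf : ∀ a b, f (a + b) = f a * f b := fun a b => blockProd_replicate_add a.pos b.pos u
  calc word k (List.replicate n u)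
      = wordMap k f (onesWord k n) := by simp [onesWord, f, blockProd]
    _ = wordMap k f (partitionExpansion r n) := by rw [partitionExpansion_eq_onesWord]
    _ = _ := by
      rw [partitionExpansion, map_sum]
      refine Finset.sum_congr rfl fun P _ => ?_
      have hpos : ∀ i ∈ P.parts, 0 < i := fun i hi => P.parts_pos hi
      have hsort : P.parts.map Nat.toPNat'
          = ((P.parts.sort (· ≤ ·)).map Nat.toPNat' : List ℕ+) := by
        conv_lhs => rw [← Multiset.sort_eq P.parts (· ≤ ·)]
        rfl
      rw [map_smul, partitionCoeff_eq r hpos, P.parts_sum, hsort, wordMap_letterProd hmr hf,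
        List.map_map]
      congr 2
      refine List.map_congr_left fun j hj => ?_
      simp [f, PNat.toPNat'_coe (hpos j ((Multiset.mem_sort _).1 hj))]
end
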